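/- Let G be a group. Then the second derived subgroup of ν(G) satisfies ν(G)'' = [G', (G')^φ] · G'' · (G'')^φ, where G and G^φ are identified with their canonical images in ν(G), G' and G'' are the images in ν(G) of the first and second derived subgroups of G, and (G')^φ, (G'')^φ are the corresponding subgroups of the copy G^φ. -/

import Mathlib

namespace TensorNu

universe u

/-- The commutator `[x,y] = x⁻¹y⁻¹xy`. -/
def comm {K : Type*} [Group K] (x y : K) : K := x⁻¹ * y⁻¹ * x * y

/-- Conjugation `x^y = y⁻¹xy`. -/
def conj {K : Type*} [Group K] (x y : K) : K := y⁻¹ * x * y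

variable (G : Type u) [Group G]

/-- The defining relators of `ν(G)`, as elements of the free group on `G ⊕ G`,
where `Sum.inl` corresponds to the canonical copy of `G` and `Sum.inr` to the
isomorphic copy `G^φ` (`g ↦ g^φ`).  They comprise the multiplication tables of
`G` and of `G^φ`, together with the relations
`[g₁,g₂^φ]^{g₃} = [g₁^{g₃},(g₂^{g₃})^φ]` and `[g₁,g₂^φ]^{g₃} = [g₁,g₂^φ]^{g₃^φ}`. -/
def nuRels : Set (FreeGroup (G ⊕ G)) :=
  {r | (∃ g h : G, r = FreeGroup.of (Sum.inl g) * FreeGroup.of (Sum.inl h) *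
          (FreeGroup.of (Sum.inl (g * h)))⁻¹)
     ∨ (∃ g h : G, r = FreeGroup.of (Sum.inr g) * FreeGroup.of (Sum.inr h) *
          (FreeGroup.of (Sum.inr (g * h)))⁻¹)
     ∨ (∃ g₁ g₂ g₃ : G, r =
          conj (comm (FreeGroup.of (Sum.inl g₁)) (FreeGroup.of (Sum.inr g₂)))
              (FreeGroup.of (Sum.inl g₃)) *
            (comm (FreeGroup.of (Sum.inl (conj g₁ g₃)))
              (FreeGroup.of (Sum.inr (conj g₂ g₃))))⁻¹)
     ∨ (∃ g₁ g₂ g₃ : G, r =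
          conj (comm (FreeGroup.of (Sum.inl g₁)) (FreeGroup.of (Sum.inr g₂)))
              (FreeGroup.of (Sum.inl g₃)) *
            (conj (comm (FreeGroup.of (Sum.inl g₁)) (FreeGroup.of (Sum.inr g₂)))
              (FreeGroup.of (Sum.inr g₃)))⁻¹)}

/-- The group `ν(G)`. -/
abbrev Nu := PresentedGroup (nuRels G)

/-- The canonical image of `g ∈ G` in `ν(G)`. -/
def ι (g : G) : Nu G := PresentedGroup.of (Sum.inl g)

/-- The canonical image `g^φ` of `g ∈ G` (via the copy `G^φ`) in `ν(G)`. -/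
def ιφ (g : G) : Nu G := PresentedGroup.of (Sum.inr g)

/-- The set `T⊗(G)` of tensors `[a, b^φ]`, `a, b ∈ G`. -/
def tensorSet : Set (Nu G) := {x | ∃ a b : G, x = comm (ι G a) (ιφ G b)}

/-- The image of `G` in `ν(G)` as a subgroup. -/
def GSub : Subgroup (Nu G) := Subgroup.closure (Set.range (ι G))

/-- The image of `G^φ` in `ν(G)` as a subgroup. -/
def GφSub : Subgroup (Nu G) := Subgroup.closure (Set.range (ιφ G))

/-- The non-abelian tensor square `[G, G^φ] ≤ ν(G)`. -/
def tensorSquare : Subgroup (Nu G) := ⁅GSub G, GφSub G⁆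

/-- `[S, x]`: the subgroup generated by the commutators `[s, x]`, `s ∈ S`. -/
def commSub {K : Type*} [Group K] (S : Set K) (x : K) : Subgroup K :=
  Subgroup.closure {c | ∃ s ∈ S, c = comm s x}

end TensorNu

/-!
Write `a ⊗ b` for the tensor `[a, b^φ]`. The defining relations say that `x` and `x^φ` both act on
tensors diagonally, `(a ⊗ b)^x = a^x ⊗ b^x`, and they imply `[k, a ⊗ b] = k ⊗ [a, b]`,
`[k^φ, a ⊗ b] = k ⊗ [a, b]` and `(a ⊗ b)^(c ⊗ d) = (a ⊗ b)^[c, d]`.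

For normal subgroups `M, N` of `G` with `[M, M] ≤ N`, let `⟨M; N⟩ ≤ ν(G)` be generated by the
tensors `a ⊗ b` with `a, b ∈ M` together with `N` and `N^φ`. The identities above show that the
generators of `⟨M; N⟩` normalize `⟨N; [N, N]⟩` and that their commutators lie in it, so
`⟨M; N⟩' ≤ ⟨N; [N, N]⟩`. Starting from `ν(G) = ⟨G; G⟩`, this gives
`ν(G)^(n+1) ≤ ⟨G^(n); G^(n+1)⟩`, and the reverse inclusion is clear. Finally
`[G^(n), (G^(n))^φ]` is normal in `ν(G)` and contains `[G^(n+1), (G^(n+1))^φ]`, so the subgroup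
`⟨G^(n); G^(n+1)⟩` is the product set of its three pieces.
-/

open scoped commutatorElement Pointwise

namespace TensorNu

open Subgroup

section GroupLemmas

variable {K : Type*} [Group K]

theorem comm_eq_commutatorElement (x y : K) : comm x y = ⁅x⁻¹, y⁻¹⁆ := by
  simp only [comm, commutatorElement_def, inv_inv]

theorem commutatorElement_eq_comm (x y : K) : ⁅x, y⁆ = comm x⁻¹ y⁻¹ := by
  rw [comm_eq_commutatorElement, inv_inv, inv_inv]

theorem comm_inv (x y : K) : (comm x y)⁻¹ = comm y x := by
  simp only [comm]; group

theorem conj_mul_left (x y z : K) : conj (x * y) z = conj x z * conj y z := by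
  simp only [conj]; group

theorem conj_mul_right (x y z : K) : conj x (y * z) = conj (conj x y) z := by
  simp only [conj]; group

theorem conj_inv_right (x y : K) : conj x y⁻¹ = y * x * y⁻¹ := by
  simp only [conj, inv_inv]

theorem conj_eq_mul_comm (x y : K) : conj x y = x * comm x y := by
  simp only [conj, comm]; group

theorem comm_eq_inv_mul_conj (x y : K) : comm x y = x⁻¹ * conj x y := by
  simp only [conj, comm]; group

theorem comm_mul_right (x y z : K) : comm x (y * z) = comm x z * conj (comm x y) z := by
  simp only [conj, comm]; group

theorem comm_inv_eq_conj_comm (x y : K) : (comm x y)⁻¹ = conj (comm x y⁻¹) y := by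
  simp only [conj, comm]; group

theorem map_comm {K' : Type*} [Group K'] (f : K →* K') (x y : K) :
    f (comm x y) = comm (f x) (f y) := by
  simp only [comm, map_mul, map_inv]

theorem map_conj {K' : Type*} [Group K'] (f : K →* K') (x y : K) :
    f (conj x y) = conj (f x) (f y) := by
  simp only [conj, map_mul, map_inv]

theorem comm_mem_commutator {M N : Subgroup K} {x y : K} (hx : x ∈ M) (hy : y ∈ N) :
    comm x y ∈ ⁅M, N⁆ := by
  rw [comm_eq_commutatorElement]
  exact commutator_mem_commutator (inv_mem hx) (inv_mem hy)

theorem closure_le_normalizer_closure {X S : Set K} (hX : ∀ x ∈ X, x⁻¹ ∈ X)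
    (h : ∀ x ∈ X, ∀ s ∈ S, conj s x ∈ closure S) : closure X ≤ normalizer (closure S : Set K) := by
  refine (closure_le _).mpr fun x hx => mem_normalizer_iff_map_conj_eq.mpr (le_antisymm ?_ ?_)
  · rw [MonoidHom.map_closure, closure_le]
    rintro _ ⟨s, hs, rfl⟩
    simpa [conj_inv_right] using h _ (hX x hx) s hs
  · refine (closure_le _).mpr fun s hs => ⟨conj s x, h x hx s hs, ?_⟩
    simp [conj, mul_assoc]

theorem commutator_closure_le {S : Set K} {H : Subgroup K}
    (hS : closure S ≤ normalizer (H : Set K)) (h : ∀ s ∈ S, ∀ t ∈ S, ⁅s, t⁆ ∈ H) :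
    ⁅closure S, closure S⁆ ≤ H := by
  have conj_mem {x k : K} (hx : x ∈ normalizer (H : Set K)) (hk : k ∈ H) : x * k * x⁻¹ ∈ H :=
    (mem_normalizer_iff.mp hx k).mp hk
  refine commutator_le.mpr fun x hx y hy => ?_
  induction hx, hy using closure_induction₂ with
  | mem s t hs ht => exact h s hs t ht
  | one_left => simp
  | one_right => simp
  | mul_left a b c ha _ _ iha ihb =>
    rw [commutatorElement_mul_left_eq_conj_mul]
    exact mul_mem (conj_mem (hS ha) ihb) iha
  | mul_right b c a hb _ _ iha ihb =>
    rw [commutatorElement_mul_right_eq_mul_conj, mul_assoc _ b, mul_assoc]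
    exact mul_mem iha (conj_mem (hS hb) ihb)
  | inv_left a b ha _ iha =>
    rw [commutatorElement_inv_left, ← commutatorElement_inv]
    simpa using conj_mem (hS (inv_mem ha)) (inv_mem iha)
  | inv_right a b _ hb iha =>
    rw [commutatorElement_inv_right, ← commutatorElement_inv]
    simpa using conj_mem (hS (inv_mem hb)) (inv_mem iha)

theorem coe_sup_sup_eq_mul_mul (L A B : Subgroup K) [L.Normal] (h : ⁅A, B⁆ ≤ L) :
    ((L ⊔ A ⊔ B : Subgroup K) : Set K) = (L : Set K) * (A : Set K) * (B : Set K) := by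
  have hB : B ≤ normalizer ((L ⊔ A : Subgroup K) : Set K) := by
    refine le_normalizer_iff.mpr fun b hb k hk => ?_
    rw [← SetLike.mem_coe, normal_mul] at hk
    obtain ⟨l, hl, a, ha, rfl⟩ := hk
    have hconj : b * (l * a) * b⁻¹ = (b * l * b⁻¹) * (⁅a, b⁆⁻¹ * a) := by
      simp only [commutatorElement_def]; group
    rw [hconj]
    exact mul_mem (mem_sup_left (Normal.conj_mem inferInstance l hl b))
      (mul_mem (mem_sup_left (inv_mem (h (commutator_mem_commutator ha hb)))) (mem_sup_right ha))
  rw [coe_mul_of_right_le_normalizer_left _ _ hB, normal_mul]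

end GroupLemmas

local notation:70 a:71 " ⊗ " b:71 => comm (ι _ a) (ιφ _ b)

variable {G : Type u} [Group G]

section Presentation

theorem mk_eq_one_of_mem_nuRels {r : FreeGroup (G ⊕ G)} (hr : r ∈ nuRels G) :
    PresentedGroup.mk (nuRels G) r = 1 :=
  (QuotientGroup.eq_one_iff r).mpr (subset_normalClosure hr)

theorem ι_mul (g h : G) : ι G (g * h) = ι G g * ι G h := by
  have hr := mk_eq_one_of_mem_nuRels (Or.inl ⟨g, h, rfl⟩)
  simp only [map_mul, map_inv, mul_inv_eq_one] at hr
  exact hr.symm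

theorem ιφ_mul (g h : G) : ιφ G (g * h) = ιφ G g * ιφ G h := by
  have hr := mk_eq_one_of_mem_nuRels (Or.inr (Or.inl ⟨g, h, rfl⟩))
  simp only [map_mul, map_inv, mul_inv_eq_one] at hr
  exact hr.symm

def ιHom : G →* Nu G := MonoidHom.mk' (ι G) ι_mul

def ιφHom : G →* Nu G := MonoidHom.mk' (ιφ G) ιφ_mul

theorem ι_inv (g : G) : ι G g⁻¹ = (ι G g)⁻¹ := map_inv ιHom g

theorem ιφ_inv (g : G) : ιφ G g⁻¹ = (ιφ G g)⁻¹ := map_inv ιφHom g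

theorem ι_conj (g h : G) : ι G (conj g h) = conj (ι G g) (ι G h) := map_conj ιHom g h

theorem ιφ_conj (g h : G) : ιφ G (conj g h) = conj (ιφ G g) (ιφ G h) := map_conj ιφHom g h

theorem ι_comm (g h : G) : ι G (comm g h) = comm (ι G g) (ι G h) := map_comm ιHom g h

theorem ιφ_comm (g h : G) : ιφ G (comm g h) = comm (ιφ G g) (ιφ G h) := map_comm ιφHom g h

theorem closure_range_ι_union_range_ιφ : closure (Set.range (ι G) ∪ Set.range (ιφ G)) = ⊤ := by
  rw [← PresentedGroup.closure_range_of, Sum.range_eq]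
  rfl

theorem conj_tensor_ι (a b x : G) : conj (a ⊗ b) (ι G x) = conj a x ⊗ conj b x := by
  have hr := mk_eq_one_of_mem_nuRels (Or.inr (Or.inr (Or.inl ⟨a, b, x, rfl⟩)))
  simp only [map_mul, map_inv, map_comm, map_conj, mul_inv_eq_one] at hr
  exact hr

theorem conj_tensor_ιφ_eq_conj_tensor_ι (a b x : G) :
    conj (a ⊗ b) (ιφ G x) = conj (a ⊗ b) (ι G x) := by
  have hr := mk_eq_one_of_mem_nuRels (Or.inr (Or.inr (Or.inr ⟨a, b, x, rfl⟩)))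
  simp only [map_mul, map_inv, map_comm, map_conj, mul_inv_eq_one] at hr
  exact hr.symm

theorem conj_tensor_ιφ (a b x : G) : conj (a ⊗ b) (ιφ G x) = conj a x ⊗ conj b x := by
  rw [conj_tensor_ιφ_eq_conj_tensor_ι, conj_tensor_ι]

end Presentation

section TensorIdentities

theorem tensor_eq_mul (x y : G) : x ⊗ y = ι G x⁻¹ * ιφ G y⁻¹ * ι G x * ιφ G y := by
  rw [ι_inv, ιφ_inv]; rfl

theorem tensor_inv (a b : G) : (a ⊗ b)⁻¹ = conj a b ⊗ b⁻¹ := by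
  rw [comm_inv_eq_conj_comm, ← ιφ_inv, conj_tensor_ιφ]
  simp [conj]

theorem conj_tensor_tensor (a b x y : G) :
    conj (a ⊗ b) (x ⊗ y) = conj (a ⊗ b) (ι G (comm x y)) := by
  rw [tensor_eq_mul x y, conj_tensor_ι, show comm x y = x⁻¹ * y⁻¹ * x * y from rfl]
  simp only [conj_mul_right, conj_tensor_ι, conj_tensor_ιφ]

theorem comm_ι_tensor (k g h : G) : comm (ι G k) (g ⊗ h) = k ⊗ comm g h := by
  have hk : conj (conj k g⁻¹) g = k := by simp [conj, mul_assoc]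
  have hgh : comm g h = conj h⁻¹ g * h := by simp [comm, conj]
  calc comm (ι G k) (g ⊗ h)
      = (ι G k)⁻¹ * conj (ι G k) (ι G g⁻¹ * ιφ G h⁻¹ * ι G g * ιφ G h) := by
        rw [comm_eq_inv_mul_conj, tensor_eq_mul]
    _ = (ι G k)⁻¹ * (ι G k * (k ⊗ h) * (conj k h ⊗ conj (conj h⁻¹ g) h)) := by
        rw [conj_mul_right, conj_mul_right, conj_mul_right, ← ι_conj,
          conj_eq_mul_comm (ι G _) (ιφ G h⁻¹), conj_mul_left, ← ι_conj, conj_tensor_ι, hk,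
          conj_mul_left, conj_eq_mul_comm (ι G k), conj_tensor_ιφ]
    _ = (k ⊗ h) * conj (k ⊗ conj h⁻¹ g) (ιφ G h) := by
        rw [conj_tensor_ιφ]; group
    _ = k ⊗ comm g h := by
        rw [hgh, ιφ_mul, comm_mul_right]

theorem comm_ιφ_tensor (k g h : G) : comm (ιφ G k) (g ⊗ h) = k ⊗ comm g h := by
  rw [← comm_inv, comm_eq_inv_mul_conj, conj_tensor_ιφ_eq_conj_tensor_ι, ← comm_eq_inv_mul_conj,
    comm_inv, comm_ι_tensor]

theorem comm_tensor_tensor (a b c d : G) : comm (a ⊗ b) (c ⊗ d) = (comm c d ⊗ comm a b)⁻¹ := by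
  rw [comm_eq_inv_mul_conj, conj_tensor_tensor, ← comm_eq_inv_mul_conj, ← comm_inv,
    comm_ι_tensor]

end TensorIdentities

section Generators

def tensorSetOf (M : Subgroup G) : Set (Nu G) := {x | ∃ u ∈ M, ∃ v ∈ M, x = u ⊗ v}

-- `closure (nuGens M N)` is the subgroup `⟨M; N⟩` of the header.
def nuGens (M N : Subgroup G) : Set (Nu G) := tensorSetOf M ∪ ι G '' N ∪ ιφ G '' N

theorem closure_image_ι (H : Subgroup G) : closure (ι G '' H) = H.map ιHom := by
  rw [← closure_eq H, MonoidHom.map_closure, closure_eq]; rfl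

theorem closure_image_ιφ (H : Subgroup G) : closure (ιφ G '' H) = H.map ιφHom := by
  rw [← closure_eq H, MonoidHom.map_closure, closure_eq]; rfl

theorem tensor_mem_commutator_map {M N : Subgroup G} {u v : G} (hu : u ∈ M) (hv : v ∈ N) :
    u ⊗ v ∈ ⁅M.map ιHom, N.map ιφHom⁆ :=
  comm_mem_commutator (mem_map_of_mem _ hu) (mem_map_of_mem _ hv)

theorem closure_tensorSetOf (M : Subgroup G) :
    closure (tensorSetOf M) = ⁅M.map ιHom, M.map ιφHom⁆ := by
  refine le_antisymm ((closure_le _).mpr ?_) (commutator_le.mpr ?_)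
  · rintro _ ⟨u, hu, v, hv, rfl⟩
    exact tensor_mem_commutator_map hu hv
  · rintro _ ⟨u, hu, rfl⟩ _ ⟨v, hv, rfl⟩
    rw [commutatorElement_eq_comm, ← map_inv, ← map_inv]
    exact subset_closure ⟨u⁻¹, inv_mem hu, v⁻¹, inv_mem hv, rfl⟩

instance normal_commutator_map_ιHom_map_ιφHom (M : Subgroup G) [hM : M.Normal] :
    ⁅M.map ιHom, M.map ιφHom⁆.Normal := by
  rw [← closure_tensorSetOf, ← normalizer_eq_top_iff, eq_top_iff,
    ← closure_range_ι_union_range_ιφ]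
  refine closure_le_normalizer_closure ?_ ?_
  · rintro _ (⟨g, rfl⟩ | ⟨g, rfl⟩)
    exacts [Or.inl ⟨g⁻¹, ι_inv g⟩, Or.inr ⟨g⁻¹, ιφ_inv g⟩]
  · rintro _ (⟨x, rfl⟩ | ⟨x, rfl⟩) _ ⟨u, hu, v, hv, rfl⟩
    all_goals
      simp only [conj_tensor_ι, conj_tensor_ιφ]
      exact subset_closure ⟨_, hM.conj_mem' u hu x, _, hM.conj_mem' v hv x, rfl⟩

end Generators

section DerivedStep

theorem inv_mem_nuGens {M N : Subgroup G} [hM : M.Normal] {x : Nu G} (hx : x ∈ nuGens M N) :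
    x⁻¹ ∈ nuGens M N := by
  rcases hx with (⟨a, ha, b, hb, rfl⟩ | ⟨u, hu, rfl⟩) | ⟨u, hu, rfl⟩
  · rw [tensor_inv]
    exact Or.inl (Or.inl ⟨_, hM.conj_mem' a ha b, _, inv_mem hb, rfl⟩)
  · exact Or.inl (Or.inr ⟨u⁻¹, inv_mem hu, ι_inv u⟩)
  · exact Or.inr ⟨u⁻¹, inv_mem hu, ιφ_inv u⟩

theorem closure_nuGens_top : closure (nuGens (⊤ : Subgroup G) ⊤) = ⊤ := by
  refine eq_top_iff.mpr (closure_range_ι_union_range_ιφ (G := G) ▸ closure_mono ?_)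
  rintro _ (⟨g, rfl⟩ | ⟨g, rfl⟩)
  exacts [Or.inl (Or.inr ⟨g, mem_top g, rfl⟩), Or.inr ⟨g, mem_top g, rfl⟩]

theorem closure_nuGens_eq_sup (M N : Subgroup G) :
    closure (nuGens M N) = ⁅M.map ιHom, M.map ιφHom⁆ ⊔ N.map ιHom ⊔ N.map ιφHom := by
  rw [nuGens, Subgroup.closure_union, Subgroup.closure_union, closure_tensorSetOf,
    closure_image_ι, closure_image_ιφ]

variable {N P : Subgroup G}

theorem tensor_mem_closure_nuGens {p q : G} (hp : p ∈ N) (hq : q ∈ N) :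
    p ⊗ q ∈ closure (nuGens N P) :=
  subset_closure (Or.inl (Or.inl ⟨p, hp, q, hq, rfl⟩))

theorem ι_mem_closure_nuGens {w : G} (hw : w ∈ P) : ι G w ∈ closure (nuGens N P) :=
  subset_closure (Or.inl (Or.inr ⟨w, hw, rfl⟩))

theorem ιφ_mem_closure_nuGens {w : G} (hw : w ∈ P) : ιφ G w ∈ closure (nuGens N P) :=
  subset_closure (Or.inr ⟨w, hw, rfl⟩)

theorem commutator_map_le_closure_nuGens : ⁅N.map ιHom, N.map ιφHom⁆ ≤ closure (nuGens N P) := by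
  rw [closure_nuGens_eq_sup]
  exact le_sup_left.trans le_sup_left

variable {M : Subgroup G}

theorem closure_nuGens_le_normalizer [M.Normal] [N.Normal] (hMN : ⁅M, M⁆ ≤ N) :
    closure (nuGens M N) ≤ normalizer (closure (nuGens N ⁅N, N⁆) : Set (Nu G)) := by
  refine closure_le_normalizer_closure (fun _ => inv_mem_nuGens) fun x hx s hs => ?_
  have hab {a b : G} (ha : a ∈ M) (hb : b ∈ M) : comm a b ∈ N := hMN (comm_mem_commutator ha hb)
  rcases hs with (⟨p, hp, q, hq, rfl⟩ | ⟨w, hw, rfl⟩) | ⟨w, hw, rfl⟩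
  · exact commutator_map_le_closure_nuGens
      ((inferInstance : ⁅N.map ιHom, N.map ιφHom⁆.Normal).conj_mem' _
        (tensor_mem_commutator_map hp hq) x)
  · have hwN : w ∈ N := N.commutator_le_self hw
    rcases hx with (⟨a, ha, b, hb, rfl⟩ | ⟨u, hu, rfl⟩) | ⟨u, hu, rfl⟩
    · rw [conj_eq_mul_comm, comm_ι_tensor]
      exact mul_mem (ι_mem_closure_nuGens hw) (tensor_mem_closure_nuGens hwN (hab ha hb))
    · rw [← ι_conj]
      exact ι_mem_closure_nuGens ((inferInstance : ⁅N, N⁆.Normal).conj_mem' w hw u)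
    · rw [conj_eq_mul_comm]
      exact mul_mem (ι_mem_closure_nuGens hw) (tensor_mem_closure_nuGens hwN hu)
  · have hwN : w ∈ N := N.commutator_le_self hw
    rcases hx with (⟨a, ha, b, hb, rfl⟩ | ⟨u, hu, rfl⟩) | ⟨u, hu, rfl⟩
    · rw [conj_eq_mul_comm, comm_ιφ_tensor]
      exact mul_mem (ιφ_mem_closure_nuGens hw) (tensor_mem_closure_nuGens hwN (hab ha hb))
    · rw [conj_eq_mul_comm, ← comm_inv]
      exact mul_mem (ιφ_mem_closure_nuGens hw) (inv_mem (tensor_mem_closure_nuGens hu hwN))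
    · rw [← ιφ_conj]
      exact ιφ_mem_closure_nuGens ((inferInstance : ⁅N, N⁆.Normal).conj_mem' w hw u)

theorem comm_mem_closure_nuGens (hMN : ⁅M, M⁆ ≤ N) {x y : Nu G} (hx : x ∈ nuGens M N)
    (hy : y ∈ nuGens M N) :
    comm x y ∈ closure (nuGens N ⁅N, N⁆) := by
  have hab {a b : G} (ha : a ∈ M) (hb : b ∈ M) : comm a b ∈ N := hMN (comm_mem_commutator ha hb)
  have hN {a b : G} (ha : a ∈ N) (hb : b ∈ N) : comm a b ∈ ⁅N, N⁆ := comm_mem_commutator ha hb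
  rcases hx with (⟨a, ha, b, hb, rfl⟩ | ⟨u, hu, rfl⟩) | ⟨u, hu, rfl⟩ <;>
    rcases hy with (⟨c, hc, d, hd, rfl⟩ | ⟨v, hv, rfl⟩) | ⟨v, hv, rfl⟩
  · rw [comm_tensor_tensor]
    exact inv_mem (tensor_mem_closure_nuGens (hab hc hd) (hab ha hb))
  · rw [← comm_inv, comm_ι_tensor]
    exact inv_mem (tensor_mem_closure_nuGens hv (hab ha hb))
  · rw [← comm_inv, comm_ιφ_tensor]
    exact inv_mem (tensor_mem_closure_nuGens hv (hab ha hb))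
  · rw [comm_ι_tensor]
    exact tensor_mem_closure_nuGens hu (hab hc hd)
  · rw [← ι_comm]
    exact ι_mem_closure_nuGens (hN hu hv)
  · exact tensor_mem_closure_nuGens hu hv
  · rw [comm_ιφ_tensor]
    exact tensor_mem_closure_nuGens hu (hab hc hd)
  · rw [← comm_inv]
    exact inv_mem (tensor_mem_closure_nuGens hv hu)
  · rw [← ιφ_comm]
    exact ιφ_mem_closure_nuGens (hN hu hv)

theorem commutator_closure_nuGens_le [M.Normal] [N.Normal] (hMN : ⁅M, M⁆ ≤ N) :
    ⁅closure (nuGens M N), closure (nuGens M N)⁆ ≤ closure (nuGens N ⁅N, N⁆) := by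
  refine commutator_closure_le (closure_nuGens_le_normalizer hMN) fun x hx y hy => ?_
  rw [commutatorElement_eq_comm]
  exact comm_mem_closure_nuGens hMN (inv_mem_nuGens hx) (inv_mem_nuGens hy)

end DerivedStep

theorem derivedSeries_succ_le_closure_nuGens (n : ℕ) :
    derivedSeries (Nu G) (n + 1) ≤
      closure (nuGens (derivedSeries G n) (derivedSeries G (n + 1))) := by
  induction n with
  | zero =>
    rw [derivedSeries_succ, derivedSeries_zero, derivedSeries_zero, ← closure_nuGens_top]
    exact commutator_closure_nuGens_le le_top
  | succ n ih =>
    exact (commutator_mono ih ih).trans (commutator_closure_nuGens_le le_rfl)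

theorem closure_nuGens_le_derivedSeries_succ (n : ℕ) :
    closure (nuGens (derivedSeries G n) (derivedSeries G (n + 1))) ≤
      derivedSeries (Nu G) (n + 1) := by
  rw [closure_nuGens_eq_sup]
  refine sup_le (sup_le (commutator_mono ?_ ?_) ?_) ?_ <;>
    exact map_derivedSeries_le_derivedSeries _ _

theorem derivedSeries_nu_succ (n : ℕ) :
    derivedSeries (Nu G) (n + 1) =
      ⁅(derivedSeries G n).map ιHom, (derivedSeries G n).map ιφHom⁆ ⊔
        (derivedSeries G (n + 1)).map ιHom ⊔ (derivedSeries G (n + 1)).map ιφHom := by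
  rw [← closure_nuGens_eq_sup]
  exact le_antisymm (derivedSeries_succ_le_closure_nuGens n)
    (closure_nuGens_le_derivedSeries_succ n)

theorem coe_derivedSeries_nu_succ (n : ℕ) :
    (derivedSeries (Nu G) (n + 1) : Set (Nu G)) =
      ((⁅(derivedSeries G n).map ιHom, (derivedSeries G n).map ιφHom⁆ : Subgroup (Nu G)) :
          Set (Nu G)) *
        ((derivedSeries G (n + 1)).map ιHom : Set (Nu G)) *
        ((derivedSeries G (n + 1)).map ιφHom : Set (Nu G)) := by
  rw [derivedSeries_nu_succ, coe_sup_sup_eq_mul_mul]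
  exact commutator_mono (map_mono (derivedSeries_antitone G n.le_succ))
    (map_mono (derivedSeries_antitone G n.le_succ))

end TensorNu

namespace TensorNu

open scoped Pointwise

/-- `ν(G)'' = [G', (G')^φ] · G'' · (G'')^φ`, where `G'`, `G''` (resp. `(G')^φ`, `(G'')^φ`)
denote the images in `ν(G)` of the first and second derived subgroups of `G`
(resp. of the copy `G^φ`). -/
theorem secondDerived_nu_eq (G : Type u) [Group G] :
    (derivedSeries (Nu G) 2 : Set (Nu G)) =
      (⁅Subgroup.closure (ι G '' (derivedSeries G 1 : Set G)),
          Subgroup.closure (ιφ G '' (derivedSeries G 1 : Set G))⁆ : Subgroup (Nu G)) *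
        (Subgroup.closure (ι G '' (derivedSeries G 2 : Set G)) : Subgroup (Nu G)) *
        (Subgroup.closure (ιφ G '' (derivedSeries G 2 : Set G)) : Subgroup (Nu G)) := by
  simp only [closure_image_ι, closure_image_ιφ]
  exact coe_derivedSeries_nu_succ 1

end TensorNu
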